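/- arXiv:hep-ph/0305001 — 2 statements merged into one kernel-verified Lean document; each statement's English description precedes it below -/
import Mathlib

section
/- With β > 0, E_j > 0 for j = 1,...,I, E_tot = ∑_j E_j, p real with e^{iβp} = 1 and ip ≠ ±∑_j ε_j E_j for all sign choices ε_j ∈ {±1}: the identity ∏_{j=1}^I [1 + n(E_j)(1 + S_j)] applied to e^{-βE_tot}/(ip − E_tot) equals ∏_{j=1}^I [1 + n(E_j)(1 + S_j)] applied to 1/(ip + E_tot), where n(E) = (e^{βE} − 1)^{-1} and S_j flips the sign of E_j. -/
open Real Complex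

noncomputable def nB (β x : ℝ) : ℝ := (Real.exp (β * x) - 1)⁻¹

def flipSigns {I : ℕ} (A : Finset (Fin I)) (E : Fin I → ℝ) : Fin I → ℝ :=
  fun j => if j ∈ A then -E j else E j

noncomputable def thermalOp {I : ℕ} (β : ℝ) (f : (Fin I → ℝ) → ℂ) (E : Fin I → ℝ) : ℂ :=
  ∑ A : Finset (Fin I),
    (∏ j ∈ Aᶜ, (1 + (nB β (E j) : ℂ))) * (∏ j ∈ A, (nB β (E j) : ℂ)) * f (flipSigns A E)

lemma exp_ne (β x : ℝ) (hβ : 0 < β) (hx : 0 < x) : Real.exp (β * x) - 1 ≠ 0 := by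
  have : (1:ℝ) < Real.exp (β * x) := by
    rw [show (1:ℝ) = Real.exp 0 by simp]
    exact Real.exp_lt_exp.mpr (by positivity)
  linarith

lemma nB_mul_exp (β x : ℝ) (hβ : 0 < β) (hx : 0 < x) :
    nB β x * Real.exp (β * x) = 1 + nB β x := by
  have h := exp_ne β x hβ hx
  unfold nB; field_simp; ring

lemma one_add_nB_mul (β x : ℝ) (hβ : 0 < β) (hx : 0 < x) :
    (1 + nB β x) * Real.exp (-(β * x)) = nB β x := by
  have h := exp_ne β x hβ hx
  have he : Real.exp (β * x) ≠ 0 := Real.exp_ne_zero _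
  unfold nB
  rw [Real.exp_neg]
  field_simp
  ring

/-- ∏_j [1 + n(E_j)(1+S_j)] e^{-βE_tot}/(ip − E_tot)
= ∏_j [1 + n(E_j)(1+S_j)] 1/(ip + E_tot). -/
theorem thermal_operator_identity (I : ℕ) (β : ℝ) (hβ : 0 < β)
    (E : Fin I → ℝ) (hE : ∀ j, 0 < E j) (p : ℝ)
    (hp : Complex.exp (Complex.I * (β : ℂ) * (p : ℂ)) = 1)
    (hden : ∀ ε : Fin I → ℝ, (∀ j, ε j = 1 ∨ ε j = -1) →
      Complex.I * p ≠ ∑ j, ((ε j * E j : ℝ) : ℂ)) :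
    thermalOp β (fun E' =>
        Complex.exp (-(β : ℂ) * ∑ j, (E' j : ℂ)) /
          (Complex.I * (p : ℂ) - ∑ j, (E' j : ℂ))) E
      = thermalOp β (fun E' =>
          (Complex.I * (p : ℂ) + ∑ j, (E' j : ℂ))⁻¹) E := by
  unfold thermalOp
  have key : ∀ A : Finset (Fin I),
      (∏ j ∈ Aᶜ, (1 + (nB β (E j) : ℂ))) * (∏ j ∈ A, (nB β (E j) : ℂ)) *
        (Complex.exp (-(β : ℂ) * ∑ j, ((flipSigns A E j : ℝ) : ℂ)) /
          (Complex.I * (p : ℂ) - ∑ j, ((flipSigns A E j : ℝ) : ℂ)))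
      = (∏ j ∈ Aᶜᶜ, (1 + (nB β (E j) : ℂ))) * (∏ j ∈ Aᶜ, (nB β (E j) : ℂ)) *
        (Complex.I * (p : ℂ) + ∑ j, ((flipSigns Aᶜ E j : ℝ) : ℂ))⁻¹ := by
    intro A
    have hflip : ∀ j, flipSigns Aᶜ E j = - flipSigns A E j := by
      intro j
      simp only [flipSigns, Finset.mem_compl]
      by_cases h : j ∈ A <;> simp [h]
    rw [compl_compl]
    have hsum : (∑ j, ((flipSigns Aᶜ E j : ℝ) : ℂ)) = - ∑ j, ((flipSigns A E j : ℝ) : ℂ) := by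
      rw [← Finset.sum_neg_distrib]
      exact Finset.sum_congr rfl fun j _ => by rw [hflip]; push_cast; ring
    rw [hsum]
    have hden' : Complex.I * (p : ℂ) + -∑ j, ((flipSigns A E j : ℝ) : ℂ)
        = Complex.I * (p : ℂ) - ∑ j, ((flipSigns A E j : ℝ) : ℂ) := by ring
    rw [hden']
    rw [div_eq_mul_inv, ← mul_assoc]
    congr 1
    -- prefactor identity
    have hcast : (-(β : ℂ) * ∑ j, ((flipSigns A E j : ℝ) : ℂ))
        = ((-(β * ∑ j, flipSigns A E j) : ℝ) : ℂ) := by push_cast; ring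
    have hexp : Real.exp (-(β * ∑ j, flipSigns A E j))
        = (∏ j ∈ A, Real.exp (β * E j)) * ∏ j ∈ Aᶜ, Real.exp (-(β * E j)) := by
      rw [show -(β * ∑ j, flipSigns A E j) = ∑ j, (-(β * flipSigns A E j)) by
        rw [Finset.mul_sum, ← Finset.sum_neg_distrib]]
      rw [Real.exp_sum]
      rw [← Finset.prod_mul_prod_compl A]
      congr 1
      · exact Finset.prod_congr rfl fun j hj => by simp [flipSigns, hj]
      · refine Finset.prod_congr rfl fun j hj => ?_
        rw [Finset.mem_compl] at hj
        simp [flipSigns, hj]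
    have hreal : (∏ j ∈ Aᶜ, (1 + nB β (E j))) * (∏ j ∈ A, nB β (E j)) *
        Real.exp (-(β * ∑ j, flipSigns A E j))
        = (∏ j ∈ A, (1 + nB β (E j))) * ∏ j ∈ Aᶜ, nB β (E j) := by
      rw [hexp]
      rw [show (∏ j ∈ Aᶜ, (1 + nB β (E j))) * (∏ j ∈ A, nB β (E j)) *
        ((∏ j ∈ A, Real.exp (β * E j)) * ∏ j ∈ Aᶜ, Real.exp (-(β * E j)))
      = ((∏ j ∈ A, nB β (E j)) * ∏ j ∈ A, Real.exp (β * E j)) *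
        ((∏ j ∈ Aᶜ, (1 + nB β (E j))) * ∏ j ∈ Aᶜ, Real.exp (-(β * E j))) by ring]
      rw [← Finset.prod_mul_distrib, ← Finset.prod_mul_distrib]
      rw [Finset.prod_congr rfl fun j _ => nB_mul_exp β (E j) hβ (hE j),
          Finset.prod_congr rfl fun j _ => one_add_nB_mul β (E j) hβ (hE j)]
    rw [hcast, ← Complex.ofReal_exp]
    exact_mod_cast hreal
  calc (∑ A : Finset (Fin I),
        (∏ j ∈ Aᶜ, (1 + (nB β (E j) : ℂ))) * (∏ j ∈ A, (nB β (E j) : ℂ)) *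
          (Complex.exp (-(β : ℂ) * ∑ j, ((flipSigns A E j : ℝ) : ℂ)) /
            (Complex.I * (p : ℂ) - ∑ j, ((flipSigns A E j : ℝ) : ℂ))))
      = ∑ A : Finset (Fin I),
        (∏ j ∈ Aᶜᶜ, (1 + (nB β (E j) : ℂ))) * (∏ j ∈ Aᶜ, (nB β (E j) : ℂ)) *
          (Complex.I * (p : ℂ) + ∑ j, ((flipSigns Aᶜ E j : ℝ) : ℂ))⁻¹ :=
        Finset.sum_congr rfl fun A _ => key A
    _ = _ := Fintype.sum_bijective compl (Function.Involutive.bijective compl_involutive)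
        _ _ (fun A => rfl)
end

section
/- The one-loop Matsubara D-function D(p,E,T) = (−1)^{I+1} ∑_{l=1}^I [d_l(p,E) + n(E_l)(1 + S_l)d_l(p,E)] can be written as D(p,E,T) = [1 + ∑_{j=1}^I n(E_j)(1 + S_j)] D_0(p,E), where D_0(p,E) = (−1)^{I+1} ∑_{l=1}^I d_l(p,E). -/
/-!
Each factor of `d_l` with `k ≠ l` is odd in `E_k`: negating `E_k` swaps its two terms. Hence
`(1 + S_j) d_l = 0` for `j ≠ l`, so `(1 + S_j) D₀ = (-1)^{I+1} (1 + S_j) d_j`, and the two sides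
agree summand by summand.
-/

open Complex

/-- The auxiliary one-loop function
d_l(p,E) = ∏_{j≠l} ∑_{σ_j=±1} σ_j/(i(u_j−u_l) − E_l − σ_j E_j). -/
noncomputable def dFun {I : ℕ} (u : Fin I → ℝ) (l : Fin I) (E : Fin I → ℝ) : ℂ :=
  ∏ j ∈ Finset.univ.erase l,
    ((Complex.I * ((u j - u l : ℝ) : ℂ) - (E l : ℂ) - (E j : ℂ))⁻¹
      - (Complex.I * ((u j - u l : ℝ) : ℂ) - (E l : ℂ) + (E j : ℂ))⁻¹)

/-- The zero-temperature D-function of the one-loop diagram: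
D₀(p,E) = (−1)^{I+1} ∑_l d_l(p,E). -/
noncomputable def D0 {I : ℕ} (u : Fin I → ℝ) (E : Fin I → ℝ) : ℂ :=
  (-1 : ℂ) ^ (I + 1) * ∑ l, dFun u l E

section

variable {I : ℕ} (u E : Fin I → ℝ)

theorem dFun_update_neg_of_ne {l j : Fin I} (hjl : j ≠ l) :
    dFun u l (Function.update E j (-(E j))) = -dFun u l E := by
  have hl : Function.update E j (-(E j)) l = E l := Function.update_of_ne hjl.symm _ _
  have hj : j ∈ Finset.univ.erase l := Finset.mem_erase.mpr ⟨hjl, Finset.mem_univ j⟩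
  unfold dFun
  rw [hl]
  calc _ = ∏ k ∈ Finset.univ.erase l, ((if k = j then -1 else 1) *
          ((Complex.I * ((u k - u l : ℝ) : ℂ) - (E l : ℂ) - (E k : ℂ))⁻¹
            - (Complex.I * ((u k - u l : ℝ) : ℂ) - (E l : ℂ) + (E k : ℂ))⁻¹)) := by
        refine Finset.prod_congr rfl fun k _ => ?_
        by_cases hkj : k = j
        · subst hkj
          simp only [Function.update_self, ofReal_neg, if_true]
          ring
        · simp only [Function.update_of_ne hkj, hkj, if_false, one_mul]
    _ = _ := by rw [Finset.prod_mul_distrib, Finset.prod_ite_eq' _ _ _, if_pos hj, neg_one_mul]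

theorem sum_dFun_add_dFun_update_neg (j : Fin I) :
    ∑ l, (dFun u l E + dFun u l (Function.update E j (-(E j))))
      = dFun u j E + dFun u j (Function.update E j (-(E j))) :=
  Finset.sum_eq_single j
    (fun l _ hlj => by rw [dFun_update_neg_of_ne u E (Ne.symm hlj), add_neg_cancel])
    (by simp)

theorem D0_add_D0_update_neg (j : Fin I) :
    D0 u E + D0 u (Function.update E j (-(E j)))
      = (-1 : ℂ) ^ (I + 1) * (dFun u j E + dFun u j (Function.update E j (-(E j)))) := by
  rw [D0, D0, ← mul_add, ← Finset.sum_add_distrib, sum_dFun_add_dFun_update_neg]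

end

theorem one_loop_TOR_general (I : ℕ) (β : ℝ) (u E : Fin I → ℝ) :
    (-1 : ℂ) ^ (I + 1) * ∑ l, (dFun u l E
        + (nB β (E l) : ℂ) * (dFun u l E + dFun u l (Function.update E l (-(E l)))))
      = D0 u E + ∑ j, (nB β (E j) : ℂ) * (D0 u E + D0 u (Function.update E j (-(E j)))) := by
  simp only [D0_add_D0_update_neg]
  rw [D0, Finset.mul_sum, Finset.mul_sum, ← Finset.sum_add_distrib]
  exact Finset.sum_congr rfl fun l _ => by ring

/-- The one-loop Matsubara D-function
D(p,E,T) = (−1)^{I+1} ∑_l [d_l + n(E_l)(1+S_l)d_l] equals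
[1 + ∑_j n(E_j)(1+S_j)] D₀(p,E). -/
theorem one_loop_TOR (I : ℕ) (hI : 2 ≤ I) (β : ℝ) (hβ : 0 < β)
    (u E : Fin I → ℝ) (hE : ∀ j, 0 < E j)
    (hden : ∀ (E' : Fin I → ℝ), (∀ k, E' k = E k ∨ E' k = -E k) →
      ∀ l k : Fin I, k ≠ l → ∀ s : ℝ, s = 1 ∨ s = -1 →
        Complex.I * ((u k - u l : ℝ) : ℂ) - (E' l : ℂ) - (s : ℂ) * (E' k : ℂ) ≠ 0) :
    (-1 : ℂ) ^ (I + 1) * ∑ l, (dFun u l E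
        + (nB β (E l) : ℂ) * (dFun u l E + dFun u l (Function.update E l (-(E l)))))
      = D0 u E + ∑ j, (nB β (E j) : ℂ) * (D0 u E + D0 u (Function.update E j (-(E j)))) :=
  one_loop_TOR_general I β u E
end
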